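/- The ratio B_n / B_{n+1} of consecutive Bell numbers tends to 0 as n → ∞. -/

import Mathlib

/-!
Letting a new point join one of the `k` classes of an equivalence relation gives `k` distinct
relations on one more point, so `B (n + 1) ≥ (m + 1) · N`, where `N` counts the relations on `n`
points with more than `m` classes. A relation with at most `m` classes is the kernel of a map to
`Fin m`, so `N ≥ B n - m ^ n`. Kernels of the maps `Fin a ⊕ Fin b → Fin a` that are the identity
on `Fin a` give `B (a + b) ≥ a ^ b`, hence `2 · m ^ n ≤ B n` for large `n`, and then
`B n / B (n + 1) ≤ 2 / (m + 1)`.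
-/

/-- The Bell number `B k`: the number of equivalence relations on a `k`-element set. -/
noncomputable def bell (k : ℕ) : ℕ := Nat.card {r : Fin k → Fin k → Prop // Equivalence r}

open Filter

variable {α β : Type*}

def Equiv.setoidCongr (e : α ≃ β) : Setoid α ≃ Setoid β where
  toFun := Setoid.comap e.symm
  invFun := Setoid.comap e
  left_inv s := Setoid.ext fun a b => by simp [Setoid.comap_rel]
  right_inv s := Setoid.ext fun a b => by simp [Setoid.comap_rel]

namespace Setoid

instance [Finite α] : Finite (Setoid α) :=
  Finite.of_injective (fun s : Setoid α => (s : α → α → Prop)) fun _ _ h =>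
    Setoid.ext fun a b => iff_of_eq (congrFun₂ h a b)

theorem ker_comp_mk_of_injective {γ : Type*} (s : Setoid α) {f : Quotient s → γ}
    (hf : Function.Injective f) : ker (f ∘ Quotient.mk s) = s :=
  Setoid.ext fun a b => by simp [ker_def, hf.eq_iff, Quotient.eq]

theorem ker_sumElim_id_injective : Function.Injective fun g : β → α => ker (Sum.elim id g) := by
  intro g g' (h : ker _ = ker _)
  funext b
  have hb : ker (Sum.elim id g) (.inr b) (.inl (g b)) := ker_def.2 rfl
  rw [h] at hb
  exact (ker_def.1 hb).symm

theorem card_pow_card_le_card_setoid_sum [Finite α] [Finite β] :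
    Nat.card α ^ Nat.card β ≤ Nat.card (Setoid (α ⊕ β)) := by
  rw [← Nat.card_fun]
  exact Nat.card_le_card_of_injective _ ker_sumElim_id_injective

theorem card_setoid_card_quotient_le_le_pow [Finite α] (m : ℕ) :
    Nat.card {s : Setoid α // Nat.card (Quotient s) ≤ m} ≤ m ^ Nat.card α := by
  let f (s : {s : Setoid α // Nat.card (Quotient s) ≤ m}) : α → Fin m :=
    Fin.castLEEmb s.2 ∘ Finite.equivFin _ ∘ Quotient.mk s.1
  have hf (s) : ker (f s) = s.1 :=
    ker_comp_mk_of_injective s.1 ((Fin.castLEEmb s.2).injective.comp (Finite.equivFin _).injective)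
  have hinj : Function.Injective f := fun s t h => Subtype.ext <| by rw [← hf s, ← hf t, h]
  simpa [Nat.card_fun] using Nat.card_le_card_of_injective f hinj

def extendOption (s : Setoid α) (q : Quotient s) : Setoid (Option α) :=
  ker (Option.elim' q (Quotient.mk s))

theorem comap_some_extendOption (s : Setoid α) (q : Quotient s) :
    comap some (extendOption s q) = s :=
  Setoid.ext fun _ _ => Quotient.eq

theorem extendOption_injective :
    Function.Injective fun p : Σ s : Setoid α, Quotient s => extendOption p.1 p.2 := by
  rintro ⟨s, q⟩ ⟨t, q'⟩ (h : extendOption s q = extendOption t q')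
  obtain rfl : s = t := by
    rw [← comap_some_extendOption s q, h, comap_some_extendOption]
  induction q using Quotient.inductionOn with | h a => ?_
  have ha : extendOption s ⟦a⟧ (some a) none := ker_def.2 rfl
  rw [h] at ha
  rw [show (⟦a⟧ : Quotient s) = q' from ker_def.1 ha]

theorem card_sigma_quotient_le_card_setoid_option [Finite α] :
    Nat.card (Σ s : Setoid α, Quotient s) ≤ Nat.card (Setoid (Option α)) :=
  Nat.card_le_card_of_injective _ extendOption_injective

theorem succ_mul_card_setoid_lt_card_quotient_le_card_sigma [Finite α] (m : ℕ) :
    (m + 1) * Nat.card {s : Setoid α // m < Nat.card (Quotient s)} ≤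
      Nat.card (Σ s : Setoid α, Quotient s) := by
  let e (s : {s : Setoid α // m < Nat.card (Quotient s)}) : Fin (m + 1) ↪ Quotient s.1 :=
    (Fin.castLEEmb s.2).trans (Finite.equivFin _).symm.toEmbedding
  have hinj : Function.Injective
      fun p : {s : Setoid α // m < Nat.card (Quotient s)} × Fin (m + 1) =>
        (⟨p.1.1, e p.1 p.2⟩ : Σ s : Setoid α, Quotient s) := by
    rintro ⟨s, i⟩ ⟨t, j⟩ h
    obtain rfl : s = t := Subtype.ext (congrArg Sigma.fst h)
    simpa using (e s).injective (eq_of_heq (Sigma.mk.inj h).2)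
  simpa [Nat.card_prod, mul_comm] using Nat.card_le_card_of_injective _ hinj

theorem succ_mul_card_setoid_sub_pow_le [Finite α] (m : ℕ) :
    (m + 1) * (Nat.card (Setoid α) - m ^ Nat.card α) ≤ Nat.card (Setoid (Option α)) := by
  have hsplit : Nat.card {s : Setoid α // Nat.card (Quotient s) ≤ m} +
      Nat.card {s : Setoid α // m < Nat.card (Quotient s)} = Nat.card (Setoid α) := by
    simpa [not_le] using (Nat.card_sum.symm.trans (Nat.card_congr (Equiv.sumCompl
      fun s : Setoid α => Nat.card (Quotient s) ≤ m)))
  calc (m + 1) * (Nat.card (Setoid α) - m ^ Nat.card α)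
      ≤ (m + 1) * Nat.card {s : Setoid α // m < Nat.card (Quotient s)} := by
        have := card_setoid_card_quotient_le_le_pow (α := α) m
        gcongr; omega
    _ ≤ Nat.card (Σ s : Setoid α, Quotient s) :=
        succ_mul_card_setoid_lt_card_quotient_le_card_sigma m
    _ ≤ Nat.card (Setoid (Option α)) := card_sigma_quotient_le_card_setoid_option

end Setoid

theorem bell_eq_card_setoid (n : ℕ) : bell n = Nat.card (Setoid (Fin n)) :=
  Nat.card_congr ⟨fun r => ⟨r.1, r.2⟩, fun s => ⟨s.r, s.iseqv⟩, fun _ => rfl, fun _ => rfl⟩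

theorem bell_pos (n : ℕ) : 0 < bell n := by
  rw [bell_eq_card_setoid]
  have : Nonempty (Setoid (Fin n)) := ⟨⊥⟩
  exact Nat.card_pos

theorem pow_le_bell_add (a b : ℕ) : a ^ b ≤ bell (a + b) := by
  rw [bell_eq_card_setoid, Nat.card_congr (Equiv.setoidCongr finSumFinEquiv).symm]
  simpa using Setoid.card_pow_card_le_card_setoid_sum (α := Fin a) (β := Fin b)

theorem succ_mul_bell_sub_pow_le (m n : ℕ) : (m + 1) * (bell n - m ^ n) ≤ bell (n + 1) := by
  rw [bell_eq_card_setoid, bell_eq_card_setoid,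
    Nat.card_congr (Equiv.setoidCongr (finSuccEquiv n))]
  simpa using Setoid.succ_mul_card_setoid_sub_pow_le (α := Fin n) m

theorem eventually_two_mul_pow_le_bell (m : ℕ) : ∀ᶠ n in atTop, 2 * m ^ n ≤ bell n := by
  filter_upwards [eventually_ge_atTop (2 * m + 2 * m ^ (2 * m))] with n hn
  obtain ⟨j, rfl⟩ := Nat.exists_eq_add_of_le (le_of_add_le_left hn)
  have hj : 2 * m ^ (2 * m) ≤ 2 ^ j := by
    have := @Nat.lt_two_pow_self j
    omega
  calc 2 * m ^ (2 * m + j) = 2 * m ^ (2 * m) * m ^ j := by ring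
    _ ≤ 2 ^ j * m ^ j := by gcongr
    _ = (2 * m) ^ j := (mul_pow 2 m j).symm
    _ ≤ bell (2 * m + j) := pow_le_bell_add _ _

theorem eventually_succ_mul_bell_le (m : ℕ) :
    ∀ᶠ n in atTop, (m + 1) * bell n ≤ 2 * bell (n + 1) := by
  filter_upwards [eventually_two_mul_pow_le_bell m] with n hn
  calc (m + 1) * bell n ≤ (m + 1) * (2 * (bell n - m ^ n)) := by gcongr; omega
    _ = 2 * ((m + 1) * (bell n - m ^ n)) := by ring
    _ ≤ 2 * bell (n + 1) := by gcongr; exact succ_mul_bell_sub_pow_le m n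

theorem stmt_11 :
    Filter.Tendsto (fun n : ℕ => (bell n : ℝ) / (bell (n + 1) : ℝ))
      Filter.atTop (nhds 0) := by
  refine tendsto_order.2 ⟨fun a ha => .of_forall fun n => ha.trans_le (by positivity),
    fun ε hε => ?_⟩
  obtain ⟨m, hm⟩ := exists_nat_gt (2 / ε)
  filter_upwards [eventually_succ_mul_bell_le m] with n hn
  have hpos : (0 : ℝ) < bell (n + 1) := by exact_mod_cast bell_pos (n + 1)
  have hn' : ((m : ℝ) + 1) * bell n ≤ 2 * bell (n + 1) := by exact_mod_cast hn
  rw [div_lt_iff₀ hε] at hm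
  rw [div_lt_iff₀ hpos]
  nlinarith
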